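/- arXiv:2309.00098 — 2 statements merged into one kernel-verified Lean document; each statement's English description precedes it below -/
import Mathlib

section
/- Let H = (V, E) be a hypergraph and let S ⊆ V. For each v ∈ S, let E_v(S) denote the set of hyperedges e ∈ E such that e ∩ S = {v}. Then S is contained in some minimal transversal of H if and only if there exists a choice of hyperedges e_v ∈ E_v(S), one for each v ∈ S, such that the set (⋃_{v∈S} e_v) \ S does not contain any hyperedge of H. -/
open Finset
open scoped Classical

variable {V : Type*} [Fintype V] [DecidableEq V]

/-- A hypergraph on vertex set `V` is given by its finite set of hyperedges `E`;
the condition that every vertex belongs to at least one hyperedge. -/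
def Covers (E : Finset (Finset V)) : Prop := ∀ v : V, ∃ e ∈ E, v ∈ e

/-- A hypergraph is Sperner if no hyperedge is contained in another hyperedge. -/
def SpernerHG (E : Finset (Finset V)) : Prop := ∀ e ∈ E, ∀ f ∈ E, e ⊆ f → e = f

/-- A transversal of a hypergraph: a set of vertices intersecting all hyperedges. -/
def IsTransversal (E : Finset (Finset V)) (T : Finset V) : Prop := ∀ e ∈ E, (e ∩ T).Nonempty

/-- A minimal transversal: a transversal not properly containing another transversal. -/
def IsMinTransversal (E : Finset (Finset V)) (T : Finset V) : Prop :=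
  IsTransversal E T ∧ ∀ T' ⊆ T, IsTransversal E T' → T' = T

/-- The dual hypergraph: its hyperedges are exactly the minimal transversals. -/
noncomputable def dualHG (E : Finset (Finset V)) : Finset (Finset V) :=
  Finset.univ.filter fun T => IsMinTransversal E T

/-- The co-occurrence graph of a hypergraph: two distinct vertices are adjacent
iff some hyperedge contains both. -/
def coocGraph (E : Finset (Finset V)) : SimpleGraph V where
  Adj u v := u ≠ v ∧ ∃ e ∈ E, u ∈ e ∧ v ∈ e
  symm := by
    constructor
    rintro u v ⟨huv, e, he, hu, hv⟩
    exact ⟨Ne.symm huv, e, he, hv, hu⟩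
  loopless := by
    constructor
    rintro v ⟨hv, -⟩
    exact hv rfl

/-- A maximal clique of a graph: a clique not properly contained in any other clique. -/
def IsMaxClique (G : SimpleGraph V) (C : Finset V) : Prop :=
  G.IsClique (C : Set V) ∧ ∀ D : Finset V, G.IsClique (D : Set V) → C ⊆ D → D = C

/-- A hypergraph is conformal if every maximal clique of its co-occurrence graph
is a hyperedge. -/
def ConformalHG (E : Finset (Finset V)) : Prop :=
  ∀ C : Finset V, IsMaxClique (coocGraph E) C → C ∈ E

/-- A hypergraph is dually conformal if its dual hypergraph is conformal. -/
def DuallyConformalHG (E : Finset (Finset V)) : Prop :=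
  ConformalHG (dualHG E)

/-- A clique transversal of a graph: a set of vertices meeting all maximal cliques. -/
def IsCliqueTransversal (G : SimpleGraph V) (X : Finset V) : Prop :=
  ∀ C : Finset V, IsMaxClique G C → (C ∩ X).Nonempty

/-- A minimal clique transversal: a clique transversal not properly containing
another clique transversal. -/
def IsMinCliqueTransversal (G : SimpleGraph V) (X : Finset V) : Prop :=
  IsCliqueTransversal G X ∧ ∀ Y ⊆ X, IsCliqueTransversal G Y → Y = X

/-- The upper clique transversal number: the maximum size of a minimal clique
transversal. -/
noncomputable def uct (G : SimpleGraph V) : ℕ :=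
  (Finset.univ.filter fun X : Finset V => IsMinCliqueTransversal G X).sup Finset.card

/-
Proof idea. Every vertex `v` of a minimal transversal `T` has a private hyperedge `e_v` with
`e_v ∩ T = {v}`; for `v ∈ S` these edges witness the condition, because `(⋃ e_v) \ S` misses `T`
and so cannot contain a hyperedge. Conversely, if `A = (⋃ e_v) \ S` contains no hyperedge, its
complement is a transversal, and any minimal transversal `T` inside it contains `S`: the only
vertex of `e_v` outside `A` is `v`, so `T` can meet `e_v` only in `v`.
-/

omit [Fintype V] in
theorem isMinTransversal_iff_minimal (E : Finset (Finset V)) (T : Finset V) :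
    IsMinTransversal E T ↔ Minimal (IsTransversal E) T :=
  ⟨fun h => ⟨h.1, fun _ hT' hsub => (h.2 _ hsub hT').ge⟩,
    fun h => ⟨h.1, fun _ hsub hT' => le_antisymm hsub (h.2 hT' hsub)⟩⟩

omit [Fintype V] in
theorem IsTransversal.mono {E : Finset (Finset V)} {T T' : Finset V} (hT : IsTransversal E T)
    (hTT' : T ⊆ T') : IsTransversal E T' :=
  fun e he => (hT e he).mono (inter_subset_inter_left hTT')

theorem isTransversal_compl_iff (E : Finset (Finset V)) (A : Finset V) :
    IsTransversal E Aᶜ ↔ ∀ e ∈ E, ¬ e ⊆ A := by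
  simp only [IsTransversal, ← sdiff_eq_inter_compl, sdiff_nonempty]

omit [Fintype V] in
theorem IsTransversal.exists_isMinTransversal_subset {E : Finset (Finset V)} {T : Finset V}
    (hT : IsTransversal E T) : ∃ T' ⊆ T, IsMinTransversal E T' := by
  simpa only [isMinTransversal_iff_minimal] using exists_minimal_le_of_wellFoundedLT _ T hT

omit [Fintype V] in
theorem IsMinTransversal.exists_inter_eq_singleton {E : Finset (Finset V)} {T : Finset V}
    (hT : IsMinTransversal E T) {v : V} (hv : v ∈ T) : ∃ e ∈ E, e ∩ T = {v} := by
  have hnot : ¬ IsTransversal E (T.erase v) := fun h =>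
    notMem_erase v T ((hT.2 _ (erase_subset v T) h).symm ▸ hv)
  obtain ⟨e, he, hempty⟩ : ∃ e ∈ E, e ∩ T.erase v = ∅ := by
    simpa [IsTransversal, not_nonempty_iff_eq_empty] using hnot
  rcases (erase_eq_empty_iff _ v).1 (inter_erase v e T ▸ hempty) with hdisj | hsingle
  · exact absurd (hT.1 e he) (not_nonempty_iff_eq_empty.2 hdisj)
  · exact ⟨e, he, hsingle⟩

omit [Fintype V] in
theorem IsTransversal.subset_of_forall_inter_eq_singleton {E : Finset (Finset V)}
    {S T : Finset V} {f : V → Finset V} (hT : IsTransversal E T)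
    (hf : ∀ v ∈ S, f v ∈ E ∧ f v ∩ S = {v}) (hTf : Disjoint T (S.biUnion f \ S)) : S ⊆ T := by
  intro v hv
  obtain ⟨u, hu⟩ := hT (f v) (hf v hv).1
  obtain ⟨hufv, huT⟩ := mem_inter.1 hu
  -- `T` meets `f v` only at vertices of `S`, and `f v ∩ S = {v}`.
  have huS : u ∈ S := by
    by_contra huS
    exact disjoint_left.1 hTf huT (mem_sdiff.2 ⟨mem_biUnion.2 ⟨v, hv, hufv⟩, huS⟩)
  have huv : u = v := mem_singleton.1 ((hf v hv).2 ▸ mem_inter.2 ⟨hufv, huS⟩)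
  exact huv ▸ huT

omit [Fintype V] in
theorem disjoint_biUnion_sdiff_of_forall_inter_eq_singleton {S T : Finset V} {f : V → Finset V}
    (hf : ∀ v ∈ S, f v ∩ T = {v}) : Disjoint T (S.biUnion f \ S) := by
  refine disjoint_left.2 fun x hxT hxA => ?_
  obtain ⟨hx, hxS⟩ := mem_sdiff.1 hxA
  obtain ⟨v, hv, hxv⟩ := mem_biUnion.1 hx
  have hxv : x = v := mem_singleton.1 (hf v hv ▸ mem_inter.2 ⟨hxv, hxT⟩)
  exact hxS (hxv ▸ hv)

theorem subtransversal_iff_general (E : Finset (Finset V))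
    (S : Finset V) :
    (∃ T : Finset V, IsMinTransversal E T ∧ S ⊆ T) ↔
      ∃ f : V → Finset V, (∀ v ∈ S, f v ∈ E ∧ f v ∩ S = {v}) ∧
        ∀ e ∈ E, ¬ e ⊆ (S.biUnion f) \ S := by
  constructor
  · rintro ⟨T, hT, hST⟩
    choose! f hfE hfT using fun v (hv : v ∈ S) => hT.exists_inter_eq_singleton (hST hv)
    have hfS : ∀ v ∈ S, f v ∩ S = {v} := fun v hv => by
      rw [← inter_eq_right.2 hST, ← inter_assoc, hfT v hv, singleton_inter_of_mem hv]
    have hdisj := disjoint_biUnion_sdiff_of_forall_inter_eq_singleton hfT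
    exact ⟨f, fun v hv => ⟨hfE v hv, hfS v hv⟩,
      (isTransversal_compl_iff E _).1 (hT.1.mono (subset_compl_iff_disjoint_right.2 hdisj))⟩
  · rintro ⟨f, hf, hA⟩
    obtain ⟨T, hTA, hT⟩ := ((isTransversal_compl_iff E _).2 hA).exists_isMinTransversal_subset
    exact ⟨T, hT, hT.1.subset_of_forall_inter_eq_singleton hf
      (subset_compl_iff_disjoint_right.1 hTA)⟩

/-- `S` is contained in some minimal transversal of `H` iff there is a
choice of hyperedges `e_v ∈ E_v(S)` (i.e. `e_v ∩ S = {v}`), one for each `v ∈ S`,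
such that `(⋃_{v ∈ S} e_v) \ S` contains no hyperedge of `H`. -/
theorem subtransversal_iff [Nonempty V] (E : Finset (Finset V)) (hcov : Covers E)
    (S : Finset V) :
    (∃ T : Finset V, IsMinTransversal E T ∧ S ⊆ T) ↔
      ∃ f : V → Finset V, (∀ v ∈ S, f v ∈ E ∧ f v ∩ S = {v}) ∧
        ∀ e ∈ E, ¬ e ⊆ (S.biUnion f) \ S :=
  subtransversal_iff_general E S
end

section
/- Let H be a 2-uniform hypergraph and let G = G(H^d) be the co-occurrence graph of its dual hypergraph. Then H is not dually conformal if and only if at least one of the following holds: (a) G contains a maximal clique C that is not a transversal of H, or (b) G contains a vertex v such that the closed neighborhood of v in H (that is, the set consisting of v together with all vertices that share a hyperedge of H with v) is a clique in G. -/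
/-!
A transversal of a graph (a vertex cover) is minimal exactly when none of its vertices `v` has its
whole closed neighbourhood `N[v]` inside it: if `N[v] ⊆ T` then `T \ {v}` still covers every edge,
and conversely a vertex of `T` missing from a smaller cover `T'` has all its neighbours in `T'`.
Hence a maximal clique `C` of `G(H^d)` fails to be a hyperedge of `H^d` exactly when it is not a
transversal or contains some `N[v]`, in which case `N[v]` is a clique. Conversely, a clique
`N[v]` extends to a maximal clique, which then cannot be a minimal transversal.
-/

open Finset
open scoped Classical

variable {V : Type*} [Fintype V] [DecidableEq V]

def closedNbhd (E : Finset (Finset V)) (v : V) : Finset V :=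
  insert v (univ.filter fun u => ∃ e ∈ E, v ∈ e ∧ u ∈ e)

lemma mem_closedNbhd {E : Finset (Finset V)} {u v : V} :
    u ∈ closedNbhd E v ↔ u = v ∨ ∃ e ∈ E, v ∈ e ∧ u ∈ e := by
  simp [closedNbhd]

lemma mem_dualHG {E : Finset (Finset V)} {T : Finset V} :
    T ∈ dualHG E ↔ IsMinTransversal E T := by
  simp [dualHG]

lemma IsTransversal.erase_of_closedNbhd_subset {E : Finset (Finset V)} {T : Finset V} {v : V}
    (hE : ∀ e ∈ E, 2 ≤ e.card) (hT : IsTransversal E T) (hv : closedNbhd E v ⊆ T) :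
    IsTransversal E (T.erase v) := by
  intro e he
  by_cases hve : v ∈ e
  · obtain ⟨u, hue, huv⟩ := exists_mem_ne (hE e he) v
    have huT : u ∈ T := hv (mem_closedNbhd.2 (.inr ⟨e, he, hve, hue⟩))
    exact ⟨u, mem_inter.2 ⟨hue, mem_erase.2 ⟨huv, huT⟩⟩⟩
  · obtain ⟨w, hw⟩ := hT e he
    rw [mem_inter] at hw
    exact ⟨w, mem_inter.2 ⟨hw.1, mem_erase.2 ⟨fun h => hve (h ▸ hw.1), hw.2⟩⟩⟩

lemma IsTransversal.closedNbhd_subset_insert {E : Finset (Finset V)} {T : Finset V} {v : V}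
    (hE : ∀ e ∈ E, e.card ≤ 2) (hT : IsTransversal E T) (hv : v ∉ T) :
    closedNbhd E v ⊆ insert v T := by
  intro u hu
  rcases mem_closedNbhd.1 hu with rfl | ⟨e, he, hve, hue⟩
  · exact mem_insert_self _ _
  obtain ⟨w, hw⟩ := hT e he
  rw [mem_inter] at hw
  have hwv : w ≠ v := fun h => hv (h ▸ hw.2)
  by_cases huv : u = v
  · exact huv ▸ mem_insert_self _ _
  -- `e \ {v}` has at most one element, so it is `{u}` and the vertex of `e` in `T` is `u`.
  have hsingle : (e.erase v).card ≤ 1 := by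
    rw [card_erase_of_mem hve]
    have := hE e he
    omega
  have hwu : w = u :=
    card_le_one_iff.1 hsingle (mem_erase.2 ⟨hwv, hw.1⟩) (mem_erase.2 ⟨huv, hue⟩)
  exact mem_insert_of_mem (hwu ▸ hw.2)

lemma isMinTransversal_iff_of_card_eq_two {E : Finset (Finset V)} {T : Finset V}
    (hE : ∀ e ∈ E, e.card = 2) :
    IsMinTransversal E T ↔ IsTransversal E T ∧ ∀ v ∈ T, ¬ closedNbhd E v ⊆ T := by
  refine ⟨fun hT => ⟨hT.1, fun v hvT hv => ?_⟩,
    fun ⟨hT, hnbhd⟩ => ⟨hT, fun T' hT'T hT' => ?_⟩⟩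
  · have herase : T.erase v = T :=
      hT.2 _ (erase_subset v T) (hT.1.erase_of_closedNbhd_subset (fun e he => (hE e he).ge) hv)
    exact notMem_erase v T (by rwa [herase])
  · by_contra hne
    obtain ⟨v, hvT, hvT'⟩ := not_subset.1 fun h => hne (hT'T.antisymm h)
    have hN := hT'.closedNbhd_subset_insert (fun e he => (hE e he).le) hvT'
    exact hnbhd v hvT (hN.trans (insert_subset hvT hT'T))

lemma exists_isMaxClique_superset {α : Type*} [Finite α] (G : SimpleGraph α) {S : Finset α}
    (hS : G.IsClique (S : Set α)) : ∃ M, IsMaxClique G M ∧ S ⊆ M := by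
  obtain ⟨M, hSM, hM⟩ :=
    Finite.exists_le_maximal (p := fun C : Finset α => G.IsClique (C : Set α)) hS
  exact ⟨M, ⟨hM.1, fun D hD hMD => (hM.eq_of_le hD hMD).symm⟩, hSM⟩

theorem two_uniform_not_dually_conformal_iff_general (E : Finset (Finset V))
    (h2 : ∀ e ∈ E, e.card = 2) :
    ¬ DuallyConformalHG E ↔
      ((∃ C : Finset V, IsMaxClique (coocGraph (dualHG E)) C ∧ ¬ IsTransversal E C) ∨
       (∃ v : V, (coocGraph (dualHG E)).IsClique
          ((insert v (Finset.univ.filter fun u => ∃ e ∈ E, v ∈ e ∧ u ∈ e) :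
            Finset V) : Set V))) := by
  change _ ↔ _ ∨ ∃ v, (coocGraph (dualHG E)).IsClique (closedNbhd E v : Set V)
  simp only [DuallyConformalHG, ConformalHG, mem_dualHG, isMinTransversal_iff_of_card_eq_two h2,
    not_forall, not_and, not_not]
  constructor
  · rintro ⟨C, hC, hCmin⟩
    by_cases hT : IsTransversal E C
    · obtain ⟨v, -, hv⟩ := hCmin hT
      exact .inr ⟨v, hC.1.subset (coe_subset.2 hv)⟩
    · exact .inl ⟨C, hC, hT⟩
  · rintro (⟨C, hC, hT⟩ | ⟨v, hv⟩)
    · exact ⟨C, hC, fun h => absurd h hT⟩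
    · obtain ⟨M, hM, hvM⟩ := exists_isMaxClique_superset _ hv
      exact ⟨M, hM, fun _ => ⟨v, hvM (mem_insert_self _ _), hvM⟩⟩

/-- For a 2-uniform hypergraph `H`, `H` is not dually conformal iff
`G = G(H^d)` has a maximal clique which is not a transversal of `H`, or there is a
vertex `v` whose closed neighborhood in `H` is a clique in `G`. -/
theorem two_uniform_not_dually_conformal_iff [Nonempty V] (E : Finset (Finset V))
    (hcov : Covers E) (h2 : ∀ e ∈ E, e.card = 2) :
    ¬ DuallyConformalHG E ↔
      ((∃ C : Finset V, IsMaxClique (coocGraph (dualHG E)) C ∧ ¬ IsTransversal E C) ∨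
       (∃ v : V, (coocGraph (dualHG E)).IsClique
          ((insert v (Finset.univ.filter fun u => ∃ e ∈ E, v ∈ e ∧ u ∈ e) :
            Finset V) : Set V))) :=
  two_uniform_not_dually_conformal_iff_general E h2
end
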